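/- Let n, k, ℓ, ℓ*, τ be integers with n ≥ 10, k ≥ 2, τ ≥ 1, 1 ≤ ℓ ≤ n/5, and 1 ≤ ℓ* ≤ n/20 + 1, and let g ≥ 1 be a real number. Define f(m, j, t) := g^{j(m−j)/(k−1)} · 2^{j(m−j)·m²/2^t}. Then f(n−ℓ*, ℓ, τ) · f(n, ℓ*, τ−1)^{ℓ/(n−ℓ*)} ≤ f(n, ℓ, τ). -/

import Mathlib

/-! The `g`-exponents agree exactly, since `ℓ(n-ℓ*-ℓ) + ℓ*(n-ℓ*) · ℓ/(n-ℓ*) = ℓ(n-ℓ)`. Lowering the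
depth by one doubles the `2`-exponent of the second factor, so the claim reduces to the cubic
inequality `ℓ(n-ℓ*-ℓ)(n-ℓ*)² + 2ℓ*ℓn² ≤ ℓ(n-ℓ)n²`. Its slack factors as
`ℓℓ*(n(n-3ℓ*-2ℓ) + ℓ*(ℓ*+ℓ))`, which is nonnegative because `3ℓ* + 2ℓ ≤ n` for `n ≥ 10`. -/

noncomputable section

/-- `f(m, j, t) = g^(j(m-j)/(k-1)) * 2^(j(m-j)·m²/2^t)`. -/
def f (g : ℝ) (k m j t : ℤ) : ℝ :=
  g ^ ((j : ℝ) * ((m : ℝ) - (j : ℝ)) / ((k : ℝ) - 1)) *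
    2 ^ ((j : ℝ) * ((m : ℝ) - (j : ℝ)) * (m : ℝ) ^ 2 / 2 ^ (t : ℝ))

theorem Real.rpow_mul_rpow_mul_rpow_rpow {a b : ℝ} (ha : 0 < a) (hb : 0 < b) (x y x' y' c : ℝ) :
    a ^ x * b ^ y * (a ^ x' * b ^ y') ^ c = a ^ (x + x' * c) * b ^ (y + y' * c) := by
  rw [Real.mul_rpow (by positivity) (by positivity), ← Real.rpow_mul ha.le,
    ← Real.rpow_mul hb.le, mul_mul_mul_comm, ← Real.rpow_add ha, ← Real.rpow_add hb]

theorem hermite_exponent_add {n ℓ s : ℝ} (hs : n - s ≠ 0) (d : ℝ) :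
    ℓ * (n - s - ℓ) / d + s * (n - s) / d * (ℓ / (n - s)) = ℓ * (n - ℓ) / d := by
  field_simp
  ring

theorem cubic_exponent_le {n ℓ s : ℝ} (hn : 10 ≤ n) (hℓ0 : 0 ≤ ℓ) (hℓ : ℓ ≤ n / 5)
    (hs0 : 0 ≤ s) (hs : s ≤ n / 20 + 1) :
    ℓ * (n - s - ℓ) * (n - s) ^ 2 + 2 * (s * ℓ) * n ^ 2 ≤ ℓ * (n - ℓ) * n ^ 2 := by
  have hgap : 0 ≤ n - 3 * s - 2 * ℓ := by linarith
  have hdiff : ℓ * (n - ℓ) * n ^ 2 - (ℓ * (n - s - ℓ) * (n - s) ^ 2 + 2 * (s * ℓ) * n ^ 2)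
      = ℓ * s * (n * (n - 3 * s - 2 * ℓ) + s * (s + ℓ)) := by ring
  have : 0 ≤ ℓ * s * (n * (n - 3 * s - 2 * ℓ) + s * (s + ℓ)) := by positivity
  linarith

theorem halved_depth_exponent_le {n ℓ s T : ℝ} (hT : 0 < T) (hs : n - s ≠ 0)
    (h : ℓ * (n - s - ℓ) * (n - s) ^ 2 + 2 * (s * ℓ) * n ^ 2 ≤ ℓ * (n - ℓ) * n ^ 2) :
    ℓ * (n - s - ℓ) * (n - s) ^ 2 / T + s * (n - s) * n ^ 2 / (T / 2) * (ℓ / (n - s))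
      ≤ ℓ * (n - ℓ) * n ^ 2 / T := by
  have hsplit : ℓ * (n - s - ℓ) * (n - s) ^ 2 / T + s * (n - s) * n ^ 2 / (T / 2) * (ℓ / (n - s))
      = (ℓ * (n - s - ℓ) * (n - s) ^ 2 + 2 * (s * ℓ) * n ^ 2) / T := by
    field_simp
  rw [hsplit]
  gcongr

theorem stmt11 (n k ℓ lstar τ : ℤ) (hn : 10 ≤ n)
    (hℓ1 : 1 ≤ ℓ) (hℓ2 : (ℓ : ℝ) ≤ (n : ℝ) / 5)
    (hlstar1 : 1 ≤ lstar) (hlstar2 : (lstar : ℝ) ≤ (n : ℝ) / 20 + 1)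
    (g : ℝ) (hg : 1 ≤ g) :
    f g k (n - lstar) ℓ τ * f g k n lstar (τ - 1) ^ ((ℓ : ℝ) / ((n : ℝ) - (lstar : ℝ))) ≤
      f g k n ℓ τ := by
  have hN : (10 : ℝ) ≤ n := by exact_mod_cast hn
  have hL : (1 : ℝ) ≤ ℓ := by exact_mod_cast hℓ1
  have hS : (1 : ℝ) ≤ lstar := by exact_mod_cast hlstar1
  have hNS : (n : ℝ) - lstar ≠ 0 := by linarith
  unfold f
  push_cast
  rw [Real.rpow_mul_rpow_mul_rpow_rpow (by linarith) two_pos, hermite_exponent_add hNS]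
  have hT : (2 : ℝ) ^ ((τ : ℝ) - 1) = 2 ^ (τ : ℝ) / 2 := by
    rw [Real.rpow_sub two_pos, Real.rpow_one]
  rw [hT]
  refine mul_le_mul_of_nonneg_left (Real.rpow_le_rpow_of_exponent_le one_le_two ?_) (by positivity)
  exact halved_depth_exponent_le (by positivity) hNS
    (cubic_exponent_le hN (by linarith) hℓ2 (by linarith) hlstar2)
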